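/- arXiv:2501.19213 — 5 statements merged into one kernel-verified Lean document; each statement's English description precedes it below -/
import Mathlib

section
/- Suppose b := 1_d^⊤Σ^{-1}μ > 0 and let x_TAN := Σ^{-1}μ/b (the tangency portfolio with zero risk-free rate). Then 1_d^⊤x_TAN = 1, and for every x ∈ ℝ^d with 1_d^⊤x = 1 one has μ^⊤x / √(x^⊤Σx) ≤ √c = μ^⊤x_TAN / √(x_TAN^⊤Σx_TAN); i.e., x_TAN maximizes the Sharpe ratio μ^⊤x/√(x^⊤Σx) among all fully invested portfolios. -/
/-! Cauchy–Schwarz for the inner product `⟪u, v⟫ = uᵀ Σ v`, applied to `x` and `Σ⁻¹ μ`, gives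
`(μᵀx)² ≤ c · xᵀΣx`, so no portfolio has Sharpe ratio above `√c`, and equality holds on the
open ray through `Σ⁻¹ μ`. Dividing by `b > 0` keeps `x_TAN` on that ray and normalizes its
weights to sum to `1`. -/

open Matrix

namespace Matrix

variable {n : Type*} [Fintype n]

theorem PosSemidef.dotProduct_mulVec_sq_le {A : Matrix n n ℝ} (hA : A.PosSemidef)
    (x y : n → ℝ) :
    (x ⬝ᵥ (A *ᵥ y)) ^ 2 ≤ (x ⬝ᵥ (A *ᵥ x)) * (y ⬝ᵥ (A *ᵥ y)) := by
  let := A.toSeminormedAddCommGroup hA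
  let := A.toInnerProductSpace hA
  have hinner (u v : n → ℝ) : inner ℝ u v = u ⬝ᵥ (A *ᵥ v) :=
    (dotProduct_comm _ _).trans (by rw [star_trivial])
  simpa only [hinner, sq] using real_inner_mul_inner_self_le x y

variable [DecidableEq n]

theorem mulVec_nonsing_inv_mulVec {α : Type*} [CommRing α] {A : Matrix n n α}
    (hA : IsUnit A.det) (v : n → α) :
    A *ᵥ (A⁻¹ *ᵥ v) = v := by
  rw [mulVec_mulVec, mul_nonsing_inv A hA, one_mulVec]

theorem PosDef.isUnit_det {K : Type*} [Field K] [PartialOrder K] [StarRing K]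
    {A : Matrix n n K} (hA : A.PosDef) : IsUnit A.det :=
  (isUnit_iff_isUnit_det A).mp hA.isUnit

theorem PosDef.dotProduct_sq_le {A : Matrix n n ℝ} (hA : A.PosDef) (μ x : n → ℝ) :
    (μ ⬝ᵥ x) ^ 2 ≤ (μ ⬝ᵥ (A⁻¹ *ᵥ μ)) * (x ⬝ᵥ (A *ᵥ x)) := by
  have hCS := hA.posSemidef.dotProduct_mulVec_sq_le x (A⁻¹ *ᵥ μ)
  rwa [mulVec_nonsing_inv_mulVec hA.isUnit_det, dotProduct_comm (A⁻¹ *ᵥ μ), dotProduct_comm x,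
    mul_comm] at hCS

end Matrix

theorem div_sqrt_le_sqrt_of_sq_le_mul {p c s : ℝ} (hc : 0 ≤ c) (h : p ^ 2 ≤ c * s) :
    p / √s ≤ √c := by
  rcases (Real.sqrt_nonneg s).eq_or_lt with hs | hs
  · rw [← hs, div_zero]
    exact Real.sqrt_nonneg c
  rw [div_le_iff₀ hs, ← Real.sqrt_mul hc]
  exact (le_abs_self p).trans (Real.abs_le_sqrt h)

section Portfolio

variable {n : Type*} [Fintype n]

noncomputable def sharpeRatio (A : Matrix n n ℝ) (μ x : n → ℝ) : ℝ :=
  μ ⬝ᵥ x / √(x ⬝ᵥ (A *ᵥ x))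

variable [DecidableEq n]

theorem sharpeRatio_le_sqrt {A : Matrix n n ℝ} (hA : A.PosDef) (μ x : n → ℝ) :
    sharpeRatio A μ x ≤ √(μ ⬝ᵥ (A⁻¹ *ᵥ μ)) := by
  have hc : 0 ≤ μ ⬝ᵥ (A⁻¹ *ᵥ μ) := by
    simpa using hA.posSemidef.inv.dotProduct_mulVec_nonneg μ
  exact div_sqrt_le_sqrt_of_sq_le_mul hc (hA.dotProduct_sq_le μ x)

theorem sharpeRatio_smul_inv_mulVec {A : Matrix n n ℝ} (hA : IsUnit A.det) (μ : n → ℝ)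
    {t : ℝ} (ht : 0 < t) :
    sharpeRatio A μ (t • (A⁻¹ *ᵥ μ)) = √(μ ⬝ᵥ (A⁻¹ *ᵥ μ)) := by
  set c := μ ⬝ᵥ (A⁻¹ *ᵥ μ)
  have hquad : (t • (A⁻¹ *ᵥ μ)) ⬝ᵥ (A *ᵥ (t • (A⁻¹ *ᵥ μ))) = t ^ 2 * c := by
    rw [mulVec_smul, mulVec_nonsing_inv_mulVec hA, smul_dotProduct, dotProduct_smul,
      dotProduct_comm, smul_eq_mul, smul_eq_mul]
    ring
  rw [sharpeRatio, hquad, dotProduct_smul, smul_eq_mul, Real.sqrt_mul (sq_nonneg t),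
    Real.sqrt_sq ht.le, mul_div_mul_left _ _ ht.ne', Real.div_sqrt]

end Portfolio

theorem tangency_portfolio_maximizes_sharpe_ratio_general
    {d : ℕ} (A : Matrix (Fin d) (Fin d) ℝ) (hA : A.PosDef)
    (μ : Fin d → ℝ)
    (b c : ℝ)
    (hb : b = (fun _ => (1 : ℝ)) ⬝ᵥ (A⁻¹ *ᵥ μ))
    (hc : c = μ ⬝ᵥ (A⁻¹ *ᵥ μ))
    (hbpos : 0 < b)
    (xTAN : Fin d → ℝ) (hx : xTAN = b⁻¹ • (A⁻¹ *ᵥ μ)) :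
    ((fun _ => (1 : ℝ)) ⬝ᵥ xTAN = 1) ∧
    (∀ x : Fin d → ℝ, (fun _ => (1 : ℝ)) ⬝ᵥ x = 1 →
      μ ⬝ᵥ x / Real.sqrt (x ⬝ᵥ (A *ᵥ x)) ≤ Real.sqrt c) ∧
    (Real.sqrt c = μ ⬝ᵥ xTAN / Real.sqrt (xTAN ⬝ᵥ (A *ᵥ xTAN))) := by
  subst hc hx
  refine ⟨?_, fun x _ => sharpeRatio_le_sqrt hA μ x,
    (sharpeRatio_smul_inv_mulVec hA.isUnit_det μ (inv_pos.mpr hbpos)).symm⟩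
  rw [dotProduct_smul, ← hb, smul_eq_mul, inv_mul_cancel₀ hbpos.ne']

/-- If `b = 1ᵀΣ⁻¹μ > 0`, the tangency portfolio `x_TAN = Σ⁻¹μ / b` is
fully invested and maximizes the Sharpe ratio `μᵀx / √(xᵀΣx)` among all fully
invested portfolios, the maximal value being `√c`. -/
theorem tangency_portfolio_maximizes_sharpe_ratio
    {d : ℕ} (hd : 2 ≤ d) (A : Matrix (Fin d) (Fin d) ℝ) (hA : A.PosDef)
    (μ : Fin d → ℝ)
    (b c : ℝ)
    (hb : b = (fun _ => (1 : ℝ)) ⬝ᵥ (A⁻¹ *ᵥ μ))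
    (hc : c = μ ⬝ᵥ (A⁻¹ *ᵥ μ))
    (hbpos : 0 < b)
    (xTAN : Fin d → ℝ) (hx : xTAN = b⁻¹ • (A⁻¹ *ᵥ μ)) :
    ((fun _ => (1 : ℝ)) ⬝ᵥ xTAN = 1) ∧
    (∀ x : Fin d → ℝ, (fun _ => (1 : ℝ)) ⬝ᵥ x = 1 →
      μ ⬝ᵥ x / Real.sqrt (x ⬝ᵥ (A *ᵥ x)) ≤ Real.sqrt c) ∧
    (Real.sqrt c = μ ⬝ᵥ xTAN / Real.sqrt (xTAN ⬝ᵥ (A *ᵥ xTAN))) :=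
  tangency_portfolio_maximizes_sharpe_ratio_general A hA μ b c hb hc hbpos xTAN hx
end

section
/- For every i ∈ {1,…,d}, the population regression coefficients satisfy α_i = σ̃_i²·(Σ^{-1}μ)_i and 1 − 1_{d−1}^⊤β_i = σ̃_i²·(Σ^{-1}1_d)_i, where σ̃_i² > 0 (Lemma A1 of the paper, expressing the regression intercept and the deviation of the slope-sum from one in terms of the i-th coordinates of Σ^{-1}μ and Σ^{-1}1_d). -/
/-!
Let `u = eᵢ − βᵢ` (with `βᵢ` padded by `0` at `i`), the coefficient vector of the regression
residual. The normal equations `Σ₋ᵢ βᵢ = Γ₋ᵢ,ᵢ` say exactly that `Σ u = σ̃ᵢ² eᵢ`. Hence for every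
`v`, by symmetry of `Σ`, `σ̃ᵢ² (Σ⁻¹ v)ᵢ = (Σ u) ⬝ (Σ⁻¹ v) = u ⬝ v = vᵢ − βᵢᵀ v₋ᵢ`, which is the
claim for `v = μ` and `v = 1`; and `σ̃ᵢ² = uᵀ Σ u > 0` since `u ≠ 0`.
-/

open Matrix

/-- `Σ₋ᵢ`: the submatrix of `A` deleting row and column `i`. -/
noncomputable def subMat {d : ℕ} (A : Matrix (Fin d) (Fin d) ℝ) (i : Fin d) :
    Matrix {j : Fin d // j ≠ i} {j : Fin d // j ≠ i} ℝ :=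
  A.submatrix Subtype.val Subtype.val

/-- `Γ₋ᵢ,ᵢ`: the `i`-th column of `A` with its `i`-th entry removed. -/
noncomputable def gammaCol {d : ℕ} (A : Matrix (Fin d) (Fin d) ℝ) (i : Fin d) :
    {j : Fin d // j ≠ i} → ℝ :=
  fun j => A j.val i

/-- Population regression slope `βᵢ := Σ₋ᵢ⁻¹ Γ₋ᵢ,ᵢ`. -/
noncomputable def betaCoef {d : ℕ} (A : Matrix (Fin d) (Fin d) ℝ) (i : Fin d) :
    {j : Fin d // j ≠ i} → ℝ :=
  (subMat A i)⁻¹ *ᵥ gammaCol A i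

/-- Population regression intercept `αᵢ := μᵢ − βᵢᵀ μ₋ᵢ`. -/
noncomputable def alphaCoef {d : ℕ} (A : Matrix (Fin d) (Fin d) ℝ) (μ : Fin d → ℝ)
    (i : Fin d) : ℝ :=
  μ i - ∑ j : {j : Fin d // j ≠ i}, betaCoef A i j * μ j.val

/-- Schur complement `σ̃ᵢ² := Σᵢᵢ − Γ₋ᵢ,ᵢᵀ Σ₋ᵢ⁻¹ Γ₋ᵢ,ᵢ`. -/
noncomputable def schurCompl {d : ℕ} (A : Matrix (Fin d) (Fin d) ℝ) (i : Fin d) : ℝ :=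
  A i i - gammaCol A i ⬝ᵥ ((subMat A i)⁻¹ *ᵥ gammaCol A i)

noncomputable def residualCoef {d : ℕ} (A : Matrix (Fin d) (Fin d) ℝ) (i : Fin d) :
    Fin d → ℝ :=
  fun k => if h : k = i then 1 else -betaCoef A i ⟨k, h⟩

section

variable {d : ℕ} (A : Matrix (Fin d) (Fin d) ℝ) (i : Fin d)

lemma residualCoef_self : residualCoef A i i = 1 :=
  dif_pos rfl

lemma residualCoef_dotProduct (v : Fin d → ℝ) :
    residualCoef A i ⬝ᵥ v = v i - ∑ j : {j : Fin d // j ≠ i}, betaCoef A i j * v j := by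
  have hoff (j : {j : Fin d // j ≠ i}) : residualCoef A i j = -betaCoef A i j := dif_neg j.2
  rw [dotProduct, Fintype.sum_eq_add_sum_subtype_ne _ i]
  simp only [residualCoef_self, hoff, one_mul, neg_mul, Finset.sum_neg_distrib, sub_eq_add_neg]

lemma subMat_mulVec_betaCoef (hsub : IsUnit (subMat A i).det) :
    subMat A i *ᵥ betaCoef A i = gammaCol A i := by
  rw [betaCoef, mulVec_mulVec, mul_nonsing_inv _ hsub, one_mulVec]

lemma mulVec_residualCoef (hA : A.IsSymm) (hsub : IsUnit (subMat A i).det) :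
    A *ᵥ residualCoef A i = Pi.single i (schurCompl A i) := by
  ext k
  have hrow : (A *ᵥ residualCoef A i) k
      = A k i - ∑ j : {j : Fin d // j ≠ i}, betaCoef A i j * A k j := by
    rw [mulVec, dotProduct_comm, residualCoef_dotProduct]
  rw [hrow]
  by_cases hk : k = i
  · subst hk
    rw [schurCompl, ← betaCoef]
    simp [dotProduct, gammaCol, hA.apply, mul_comm]
  · have hnormal := congrFun (subMat_mulVec_betaCoef A i hsub) ⟨k, hk⟩
    simp only [mulVec, dotProduct, subMat, submatrix_apply, gammaCol] at hnormal
    simp [Pi.single_eq_of_ne hk, ← hnormal, mul_comm]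

lemma schurCompl_mul_inv_mulVec_apply (hA : A.IsSymm) (hdet : IsUnit A.det)
    (hsub : IsUnit (subMat A i).det) (v : Fin d → ℝ) :
    schurCompl A i * (A⁻¹ *ᵥ v) i = residualCoef A i ⬝ᵥ v :=
  calc schurCompl A i * (A⁻¹ *ᵥ v) i = (A *ᵥ residualCoef A i) ⬝ᵥ (A⁻¹ *ᵥ v) := by
        rw [mulVec_residualCoef A i hA hsub, single_dotProduct]
    _ = residualCoef A i ⬝ᵥ (A *ᵥ (A⁻¹ *ᵥ v)) := by
        rw [dotProduct_mulVec (residualCoef A i), ← mulVec_transpose, hA.eq]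
    _ = residualCoef A i ⬝ᵥ v := by
        rw [mulVec_mulVec, mul_nonsing_inv _ hdet, one_mulVec]

end

lemma subMat_posDef {d : ℕ} {A : Matrix (Fin d) (Fin d) ℝ} (hA : A.PosDef) (i : Fin d) :
    (subMat A i).PosDef :=
  hA.submatrix Subtype.val_injective

lemma schurCompl_pos {d : ℕ} {A : Matrix (Fin d) (Fin d) ℝ} (hA : A.PosDef) (i : Fin d) :
    0 < schurCompl A i := by
  have hsub : IsUnit (subMat A i).det := (subMat_posDef hA i).det_pos.ne'.isUnit
  have hu : residualCoef A i ≠ 0 := fun h => by simpa [residualCoef_self] using congrFun h i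
  have hquad := hA.dotProduct_mulVec_pos hu
  rwa [star_trivial, mulVec_residualCoef A i (isHermitian_iff_isSymm.mp hA.isHermitian) hsub,
    dotProduct_single, residualCoef_self, one_mul] at hquad

theorem regression_coefficients_via_inverse_general
    {d : ℕ} (A : Matrix (Fin d) (Fin d) ℝ) (hA : A.PosDef)
    (μ : Fin d → ℝ) :
    ∀ i : Fin d,
      0 < schurCompl A i ∧
      alphaCoef A μ i = schurCompl A i * (A⁻¹ *ᵥ μ) i ∧
      1 - ∑ j : {j : Fin d // j ≠ i}, betaCoef A i j
        = schurCompl A i * (A⁻¹ *ᵥ fun _ => (1 : ℝ)) i := by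
  intro i
  have hsymm : A.IsSymm := isHermitian_iff_isSymm.mp hA.isHermitian
  have hdet : IsUnit A.det := hA.det_pos.ne'.isUnit
  have hsub : IsUnit (subMat A i).det := (subMat_posDef hA i).det_pos.ne'.isUnit
  refine ⟨schurCompl_pos hA i, ?_, ?_⟩
  · rw [schurCompl_mul_inv_mulVec_apply A i hsymm hdet hsub, residualCoef_dotProduct, alphaCoef]
  · rw [schurCompl_mul_inv_mulVec_apply A i hsymm hdet hsub, residualCoef_dotProduct]
    simp

/-- Lemma A1 of the paper: `αᵢ = σ̃ᵢ²·(Σ⁻¹μ)ᵢ` and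
`1 − 1ᵀβᵢ = σ̃ᵢ²·(Σ⁻¹1)ᵢ`, with `σ̃ᵢ² > 0`. -/
theorem regression_coefficients_via_inverse
    {d : ℕ} (hd : 2 ≤ d) (A : Matrix (Fin d) (Fin d) ℝ) (hA : A.PosDef)
    (μ : Fin d → ℝ) :
    ∀ i : Fin d,
      0 < schurCompl A i ∧
      alphaCoef A μ i = schurCompl A i * (A⁻¹ *ᵥ μ) i ∧
      1 - ∑ j : {j : Fin d // j ≠ i}, betaCoef A i j
        = schurCompl A i * (A⁻¹ *ᵥ fun _ => (1 : ℝ)) i :=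
  regression_coefficients_via_inverse_general A hA μ
end

section
/- The following support identities hold (equation (A.3) of the paper): {i ∈ {1,…,d} : (Σ^{-1}μ)_i ≠ 0} = {i ∈ {1,…,d} : α_i ≠ 0} and {i ∈ {1,…,d} : (Σ^{-1}1_d)_i ≠ 0} = {i ∈ {1,…,d} : 1_{d−1}^⊤β_i ≠ 1}. -/
open Matrix

/-!
Let `v := eᵢ - βᵢ` (with `βᵢ` padded by `0` at `i`), so that `vᵀX = Xᵢ - βᵢᵀX₋ᵢ` is the regression
residual. The normal equations `Σ₋ᵢ βᵢ = Γ₋ᵢ,ᵢ` say exactly that `Σ v = c eᵢ` for the residual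
variance `c = (Σ v)ᵢ`. Hence the `i`-th column of `Σ⁻¹` is `v / c`; by symmetry so is its `i`-th
row, which gives `c (Σ⁻¹μ)ᵢ = vᵀμ = αᵢ`, and `c ≠ 0` because `c (Σ⁻¹)ᵢᵢ = vᵢ = 1`. For `μ = 1_d`,
`αᵢ = 1 - 1ᵀβᵢ`.
-/

noncomputable section

variable {d : ℕ} {A : Matrix (Fin d) (Fin d) ℝ} {i : Fin d}

variable (A i) in
def residualVec : Fin d → ℝ :=
  fun k => if h : k = i then 1 else -betaCoef A i ⟨k, h⟩

variable (A i) in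
def residualVar : ℝ :=
  (A *ᵥ residualVec A i) i

@[simp]
lemma residualVec_self : residualVec A i i = 1 := by
  simp [residualVec]

lemma residualVec_dotProduct (μ : Fin d → ℝ) : residualVec A i ⬝ᵥ μ = alphaCoef A μ i := by
  rw [dotProduct, Fintype.sum_eq_add_sum_subtype_ne _ i, alphaCoef, sub_eq_add_neg,
    ← Finset.sum_neg_distrib]
  simp [residualVec, fun j : {j : Fin d // j ≠ i} => j.2]

lemma mulVec_residualVec_apply_of_ne (hsub : IsUnit (subMat A i).det) {k : Fin d} (hk : k ≠ i) :
    (A *ᵥ residualVec A i) k = 0 := by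
  have hnormal : subMat A i *ᵥ betaCoef A i = gammaCol A i := by
    rw [betaCoef, mulVec_mulVec, mul_nonsing_inv _ hsub, one_mulVec]
  have hrow := congrFun hnormal ⟨k, hk⟩
  simp only [mulVec, dotProduct, subMat, gammaCol, submatrix_apply] at hrow
  rw [mulVec, dotProduct_comm, residualVec_dotProduct, alphaCoef, sub_eq_zero, ← hrow]
  exact Finset.sum_congr rfl fun j _ => mul_comm _ _

lemma mulVec_residualVec (hsub : IsUnit (subMat A i).det) :
    A *ᵥ residualVec A i = Pi.single i (residualVar A i) := by
  funext k
  by_cases hk : k = i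
  · subst hk
    simp [residualVar]
  · simp [hk, mulVec_residualVec_apply_of_ne hsub hk]

lemma residualVec_apply_eq_inv_mul_residualVar (hdet : IsUnit A.det)
    (hsub : IsUnit (subMat A i).det) (k : Fin d) :
    residualVec A i k = A⁻¹ k i * residualVar A i := by
  have hv : residualVec A i = A⁻¹ *ᵥ Pi.single i (residualVar A i) := by
    rw [← mulVec_residualVec hsub, mulVec_mulVec, nonsing_inv_mul _ hdet, one_mulVec]
  simp [hv]

lemma inv_apply_self_mul_residualVar (hdet : IsUnit A.det) (hsub : IsUnit (subMat A i).det) :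
    A⁻¹ i i * residualVar A i = 1 := by
  rw [← residualVec_apply_eq_inv_mul_residualVar hdet hsub, residualVec_self]

lemma residualVar_mul_inv_mulVec_apply (hA : A.IsSymm) (hdet : IsUnit A.det)
    (hsub : IsUnit (subMat A i).det) (μ : Fin d → ℝ) :
    residualVar A i * (A⁻¹ *ᵥ μ) i = alphaCoef A μ i := by
  rw [← residualVec_dotProduct, mulVec, dotProduct, dotProduct, Finset.mul_sum]
  refine Finset.sum_congr rfl fun k _ => ?_
  rw [residualVec_apply_eq_inv_mul_residualVar hdet hsub, hA.inv.apply k i]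
  ring

lemma inv_mulVec_apply_ne_zero_iff (hA : A.IsSymm) (hdet : IsUnit A.det)
    (hsub : IsUnit (subMat A i).det) (μ : Fin d → ℝ) :
    (A⁻¹ *ᵥ μ) i ≠ 0 ↔ alphaCoef A μ i ≠ 0 := by
  have hvar : residualVar A i ≠ 0 :=
    right_ne_zero_of_mul_eq_one (inv_apply_self_mul_residualVar hdet hsub)
  rw [← residualVar_mul_inv_mulVec_apply hA hdet hsub, mul_ne_zero_iff, and_iff_right hvar]

lemma alphaCoef_one :
    alphaCoef A (fun _ => 1) i = 1 - ∑ j : {j : Fin d // j ≠ i}, betaCoef A i j := by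
  simp [alphaCoef]

end

theorem support_identities_general
    {d : ℕ} (A : Matrix (Fin d) (Fin d) ℝ) (hA : A.PosDef)
    (μ : Fin d → ℝ) :
    ({i : Fin d | (A⁻¹ *ᵥ μ) i ≠ 0} = {i : Fin d | alphaCoef A μ i ≠ 0}) ∧
    ({i : Fin d | (A⁻¹ *ᵥ fun _ => (1 : ℝ)) i ≠ 0}
      = {i : Fin d | ∑ j : {j : Fin d // j ≠ i}, betaCoef A i j ≠ 1}) := by
  have hsymm : A.IsSymm := isHermitian_iff_isSymm.mp hA.isHermitian
  have hdet : IsUnit A.det := hA.det_pos.ne'.isUnit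
  have hsub (i : Fin d) : IsUnit (subMat A i).det :=
    (hA.submatrix Subtype.val_injective).det_pos.ne'.isUnit
  have hsupp (ν : Fin d → ℝ) : {i | (A⁻¹ *ᵥ ν) i ≠ 0} = {i | alphaCoef A ν i ≠ 0} :=
    Set.ext fun i => inv_mulVec_apply_ne_zero_iff hsymm hdet (hsub i) ν
  refine ⟨hsupp μ, ?_⟩
  rw [hsupp]
  simp only [alphaCoef_one, sub_ne_zero]
  simp only [ne_comm]

/-- equation (A.3) of the paper: support identities
`{i : (Σ⁻¹μ)ᵢ ≠ 0} = {i : αᵢ ≠ 0}` and `{i : (Σ⁻¹1)ᵢ ≠ 0} = {i : 1ᵀβᵢ ≠ 1}`. -/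
theorem support_identities
    {d : ℕ} (hd : 2 ≤ d) (A : Matrix (Fin d) (Fin d) ℝ) (hA : A.PosDef)
    (μ : Fin d → ℝ) :
    ({i : Fin d | (A⁻¹ *ᵥ μ) i ≠ 0} = {i : Fin d | alphaCoef A μ i ≠ 0}) ∧
    ({i : Fin d | (A⁻¹ *ᵥ fun _ => (1 : ℝ)) i ≠ 0}
      = {i : Fin d | ∑ j : {j : Fin d // j ≠ i}, betaCoef A i j ≠ 1}) :=
  support_identities_general A hA μ
end

section
/- If S ⊆ {1,…,d} contains S*, then S spans the mean-variance frontier, i.e., v_S(μ_p) = v(μ_p) for every μ_p ∈ ℝ (sufficiency direction in the identification of the minimum spanning set: every minimum-variance portfolio is supported on S*). -/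
/-!
Write the two constraints as `L x = (μ ⬝ᵥ x, 1 ⬝ᵥ x)`. Since `Σ⁻¹` is positive definite, the Gram
matrix `L Σ⁻¹ Lᵀ` has the same kernel as `Lᵀ`, hence the same range as `L`, so there is `c` with
`L Σ⁻¹ Lᵀ c = L x`. The portfolio `y = Σ⁻¹ Lᵀ c` then meets the same constraints as `x`, and
`Σ y = Lᵀ c` is orthogonal to `x - y ∈ ker L`, whence `xᵀΣx = yᵀΣy + (x - y)ᵀΣ(x - y) ≥ yᵀΣy`.
Being a combination of `Σ⁻¹μ` and `Σ⁻¹1`, `y` vanishes off `S*`.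
-/

open Matrix

/-- `v_S(p)`: the infimum of portfolio variance over fully invested portfolios
supported on `S` with target mean `p`, valued in `EReal` (so `inf ∅ = +∞`). -/
noncomputable def vS {d : ℕ} (A : Matrix (Fin d) (Fin d) ℝ) (μ : Fin d → ℝ)
    (S : Set (Fin d)) (p : ℝ) : EReal :=
  sInf {q : EReal | ∃ x : Fin d → ℝ,
    ((fun _ => (1 : ℝ)) ⬝ᵥ x = 1) ∧ (μ ⬝ᵥ x = p) ∧
    (∀ i, i ∉ S → x i = 0) ∧ q = ((x ⬝ᵥ (A *ᵥ x) : ℝ) : EReal)}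

def SpansFrontier {d : ℕ} (A : Matrix (Fin d) (Fin d) ℝ) (μ : Fin d → ℝ)
    (S : Set (Fin d)) : Prop :=
  ∀ p : ℝ, vS A μ S p = vS A μ Set.univ p

namespace Matrix

variable {ι n : Type*} [Fintype ι] [Fintype n]

theorem PosDef.ker_mulVecLin_mul_mul_transpose {B : Matrix n n ℝ} (hB : B.PosDef)
    (L : Matrix ι n ℝ) :
    LinearMap.ker (L * B * Lᵀ).mulVecLin = LinearMap.ker Lᵀ.mulVecLin := by
  ext c
  simp only [LinearMap.mem_ker, mulVecLin_apply, ← mulVec_mulVec]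
  refine ⟨fun h => ?_, fun h => by simp [h]⟩
  by_contra hc
  have hpos := hB.dotProduct_mulVec_pos hc
  rw [star_trivial, dotProduct_comm, dotProduct_transpose_mulVec, h, dotProduct_zero] at hpos
  exact hpos.false

theorem PosDef.range_mulVecLin_mul_mul_transpose {B : Matrix n n ℝ} (hB : B.PosDef)
    (L : Matrix ι n ℝ) :
    LinearMap.range (L * B * Lᵀ).mulVecLin = LinearMap.range L.mulVecLin := by
  refine Submodule.eq_of_le_of_finrank_eq ?_ ?_
  · rw [Matrix.mul_assoc, mulVecLin_mul]
    exact LinearMap.range_comp_le_range _ _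
  · have hG := (L * B * Lᵀ).mulVecLin.finrank_range_add_finrank_ker
    have hLt := Lᵀ.mulVecLin.finrank_range_add_finrank_ker
    have hrank : Lᵀ.rank = L.rank := rank_transpose L
    rw [hB.ker_mulVecLin_mul_mul_transpose] at hG
    simp only [rank] at hrank
    omega

theorem PosSemidef.dotProduct_mulVec_le_of_mulVec_eq {A : Matrix n n ℝ} (hA : A.PosSemidef)
    {L : Matrix ι n ℝ} {x y : n → ℝ} {c : ι → ℝ}
    (hAy : A *ᵥ y = Lᵀ *ᵥ c) (hLy : L *ᵥ y = L *ᵥ x) :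
    y ⬝ᵥ (A *ᵥ y) ≤ x ⬝ᵥ (A *ᵥ x) := by
  set z := x - y
  have hzy : z ⬝ᵥ (A *ᵥ y) = 0 := by
    rw [hAy, dotProduct_transpose_mulVec, mulVec_sub, hLy, sub_self, dotProduct_zero]
  have hyz : y ⬝ᵥ (A *ᵥ z) = 0 := by
    rw [← dotProduct_transpose_mulVec, (isHermitian_iff_isSymm.mp hA.isHermitian).eq, hzy]
  have hzz : 0 ≤ z ⬝ᵥ (A *ᵥ z) := by simpa using hA.dotProduct_mulVec_nonneg z
  have hx : x = y + z := (add_sub_cancel y x).symm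
  rw [hx, mulVec_add, dotProduct_add, add_dotProduct, add_dotProduct, hyz, hzy]
  linarith

theorem PosDef.exists_constrained_minimizer [DecidableEq n] {A : Matrix n n ℝ} (hA : A.PosDef)
    (L : Matrix ι n ℝ) (x : n → ℝ) :
    ∃ c : ι → ℝ, L *ᵥ (A⁻¹ *ᵥ (Lᵀ *ᵥ c)) = L *ᵥ x ∧
      (A⁻¹ *ᵥ (Lᵀ *ᵥ c)) ⬝ᵥ (A *ᵥ (A⁻¹ *ᵥ (Lᵀ *ᵥ c))) ≤ x ⬝ᵥ (A *ᵥ x) := by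
  obtain ⟨c, hc⟩ : L *ᵥ x ∈ LinearMap.range (L * A⁻¹ * Lᵀ).mulVecLin := by
    rw [hA.inv.range_mulVecLin_mul_mul_transpose]
    exact ⟨x, rfl⟩
  have hLy : L *ᵥ (A⁻¹ *ᵥ (Lᵀ *ᵥ c)) = L *ᵥ x := by
    simpa only [mulVecLin_apply, ← mulVec_mulVec] using hc
  have hAy : A *ᵥ (A⁻¹ *ᵥ (Lᵀ *ᵥ c)) = Lᵀ *ᵥ c := by
    rw [mulVec_mulVec, mul_nonsing_inv _ ((isUnit_iff_isUnit_det A).mp hA.isUnit), one_mulVec]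
  exact ⟨c, hLy, hA.posSemidef.dotProduct_mulVec_le_of_mulVec_eq hAy hLy⟩

theorem PosDef.exists_mem_span_pair_minimizer [DecidableEq n] {A : Matrix n n ℝ} (hA : A.PosDef)
    (μ ν x : n → ℝ) :
    ∃ y ∈ Submodule.span ℝ {A⁻¹ *ᵥ μ, A⁻¹ *ᵥ ν}, μ ⬝ᵥ y = μ ⬝ᵥ x ∧ ν ⬝ᵥ y = ν ⬝ᵥ x ∧
      y ⬝ᵥ (A *ᵥ y) ≤ x ⬝ᵥ (A *ᵥ x) := by
  obtain ⟨c, hLy, hle⟩ := hA.exists_constrained_minimizer (of ![μ, ν]) x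
  have hy : A⁻¹ *ᵥ ((of ![μ, ν])ᵀ *ᵥ c) = c 0 • (A⁻¹ *ᵥ μ) + c 1 • (A⁻¹ *ᵥ ν) := by
    rw [← mulVec_smul, ← mulVec_smul, ← mulVec_add]
    congr 1
    ext i
    simp [mulVec, dotProduct, Fin.sum_univ_two, mul_comm]
  refine ⟨_, Submodule.mem_span_pair.mpr ⟨c 0, c 1, hy.symm⟩, ?_, ?_, hle⟩
  · exact congrFun hLy 0
  · exact congrFun hLy 1

end Matrix

section Frontier
variable {d : ℕ} {A : Matrix (Fin d) (Fin d) ℝ} {μ : Fin d → ℝ} {p : ℝ}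

theorem vS_anti {S T : Set (Fin d)} (hST : S ⊆ T) : vS A μ T p ≤ vS A μ S p :=
  sInf_le_sInf fun _ ⟨x, h1, hμ, hS, hq⟩ =>
    ⟨x, h1, hμ, fun i hi => hS i fun h => hi (hST h), hq⟩

theorem vS_le_vS_univ {S : Set (Fin d)}
    (h : ∀ x, (fun _ => (1 : ℝ)) ⬝ᵥ x = 1 → μ ⬝ᵥ x = p → ∃ y, (fun _ => (1 : ℝ)) ⬝ᵥ y = 1 ∧
      μ ⬝ᵥ y = p ∧ (∀ i, i ∉ S → y i = 0) ∧ y ⬝ᵥ (A *ᵥ y) ≤ x ⬝ᵥ (A *ᵥ x)) :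
    vS A μ S p ≤ vS A μ Set.univ p := by
  refine le_sInf ?_
  rintro _ ⟨x, h1, hμ, -, rfl⟩
  obtain ⟨y, hy1, hyμ, hyS, hle⟩ := h x h1 hμ
  exact sInf_le_of_le ⟨y, hy1, hyμ, hyS, rfl⟩ (EReal.coe_le_coe_iff.mpr hle)

end Frontier

theorem superset_of_Sstar_spans_general
    {d : ℕ} (A : Matrix (Fin d) (Fin d) ℝ) (hA : A.PosDef)
    (μ : Fin d → ℝ) (S : Set (Fin d))
    (hS : {i : Fin d | (A⁻¹ *ᵥ μ) i ≠ 0 ∨ (A⁻¹ *ᵥ fun _ => (1 : ℝ)) i ≠ 0} ⊆ S) :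
    SpansFrontier A μ S := by
  intro p
  refine le_antisymm (vS_le_vS_univ fun x h1 hμ => ?_) (vS_anti (Set.subset_univ S))
  obtain ⟨y, hy, hyμ, hy1, hle⟩ := hA.exists_mem_span_pair_minimizer μ (fun _ => 1) x
  obtain ⟨a, b, rfl⟩ := Submodule.mem_span_pair.mp hy
  refine ⟨_, hy1.trans h1, hyμ.trans hμ, fun i hi => ?_, hle⟩
  have hi' : (A⁻¹ *ᵥ μ) i = 0 ∧ (A⁻¹ *ᵥ fun _ => (1 : ℝ)) i = 0 := by
    simpa using mt (@hS i) hi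
  simp [hi']

/-- sufficiency: any `S` containing
`S* = {i : (Σ⁻¹μ)ᵢ ≠ 0 or (Σ⁻¹1)ᵢ ≠ 0}` spans the mean-variance frontier. -/
theorem superset_of_Sstar_spans
    {d : ℕ} (hd : 2 ≤ d) (A : Matrix (Fin d) (Fin d) ℝ) (hA : A.PosDef)
    (μ : Fin d → ℝ) (S : Set (Fin d))
    (hS : {i : Fin d | (A⁻¹ *ᵥ μ) i ≠ 0 ∨ (A⁻¹ *ᵥ fun _ => (1 : ℝ)) i ≠ 0} ⊆ S) :
    SpansFrontier A μ S :=
  superset_of_Sstar_spans_general A hA μ S hS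
end

section
/- Suppose μ is not a scalar multiple of 1_d. If S ⊆ {1,…,d} spans the mean-variance frontier, then S ⊇ S* (necessity direction in the identification of the minimum spanning set: any asset with a nonzero coordinate in Σ^{-1}μ or Σ^{-1}1_d cannot be removed without shrinking the frontier). -/
/-!
If `i ∈ S*`, some frontier portfolio `x = l • Σ⁻¹μ + g • Σ⁻¹1` has `xᵢ ≠ 0`: the two coefficients
are constrained only by the budget `1 ⬝ᵥ x = 1`, which leaves a line's worth of choices. Since
`Σ x ∈ span {μ, 1}`, every portfolio `z` with the same mean and budget satisfies
`zᵀΣz = xᵀΣx + (z - x)ᵀΣ(z - x) ≥ xᵀΣx + (zᵢ - xᵢ)² / (Σ⁻¹)ᵢᵢ`. A portfolio supported on `S ∌ i`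
has `zᵢ = 0`, so `v_S(μ ⬝ᵥ x) ≥ v(μ ⬝ᵥ x) + xᵢ² / (Σ⁻¹)ᵢᵢ > v(μ ⬝ᵥ x)`.
-/

open Matrix

lemma exists_mul_add_mul_eq_one_and_ne_zero {K : Type*} [Field K] {B C a b : K} (hC : C ≠ 0)
    (hab : a ≠ 0 ∨ b ≠ 0) : ∃ l g : K, l * B + g * C = 1 ∧ l * a + g * b ≠ 0 := by
  by_cases hb : b = 0
  · refine ⟨1, (1 - B) / C, by field_simp; ring, ?_⟩
    simpa [hb] using hab
  · exact ⟨0, 1 / C, by simp [hC], by simp [hC, hb]⟩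

namespace Matrix

variable {n : Type*}

lemma PosDef.isSymm {A : Matrix n n ℝ} (hA : A.PosDef) : A.IsSymm :=
  isHermitian_iff_isSymm.mp hA.isHermitian

variable [Fintype n]

lemma IsSymm.dotProduct_mulVec_comm {R : Type*} [CommSemiring R] {A : Matrix n n R}
    (hA : A.IsSymm) (x y : n → R) : x ⬝ᵥ (A *ᵥ y) = y ⬝ᵥ (A *ᵥ x) := by
  rw [dotProduct_mulVec, ← hA.eq, vecMul_transpose, hA.eq, dotProduct_comm]

lemma IsSymm.add_dotProduct_mulVec_add {R : Type*} [CommRing R] {A : Matrix n n R}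
    (hA : A.IsSymm) (x y : n → R) :
    (x + y) ⬝ᵥ (A *ᵥ (x + y)) = x ⬝ᵥ (A *ᵥ x) + 2 * (y ⬝ᵥ (A *ᵥ x)) + y ⬝ᵥ (A *ᵥ y) := by
  rw [mulVec_add, add_dotProduct, dotProduct_add, dotProduct_add, hA.dotProduct_mulVec_comm x y]
  ring

variable [DecidableEq n] {A : Matrix n n ℝ}

lemma PosDef.mulVec_inv_mulVec (hA : A.PosDef) (y : n → ℝ) : A *ᵥ (A⁻¹ *ᵥ y) = y := by
  rw [mulVec_mulVec, mul_nonsing_inv _ hA.det_pos.ne'.isUnit, one_mulVec]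

-- `t ↦ (y + t • A⁻¹ eᵢ)ᵀ A (y + t • A⁻¹ eᵢ)` is a nonnegative quadratic, so its discriminant is `≤ 0`.
lemma PosDef.sq_apply_le_inv_apply_mul (hA : A.PosDef) (y : n → ℝ) (i : n) :
    y i ^ 2 ≤ A⁻¹ i i * (y ⬝ᵥ (A *ᵥ y)) := by
  set u := A⁻¹ *ᵥ Pi.single i 1
  have hAu : A *ᵥ u = Pi.single i 1 := hA.mulVec_inv_mulVec _
  have huy : u ⬝ᵥ (A *ᵥ y) = y i := by
    rw [hA.isSymm.dotProduct_mulVec_comm, hAu, dotProduct_single, mul_one]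
  have huu : u ⬝ᵥ (A *ᵥ u) = A⁻¹ i i := by
    rw [hAu, dotProduct_single, mul_one]
    simp [u, mulVec_single]
  have hquad : ∀ t : ℝ, 0 ≤ A⁻¹ i i * (t * t) + 2 * y i * t + y ⬝ᵥ (A *ᵥ y) := fun t => by
    have := hA.posSemidef.dotProduct_mulVec_nonneg (y + t • u)
    rw [star_trivial, hA.isSymm.add_dotProduct_mulVec_add] at this
    simp only [mulVec_smul, smul_dotProduct, dotProduct_smul, huy, huu, smul_eq_mul] at this
    linarith
  have := discrim_le_zero hquad
  rw [discrim] at this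
  linarith

-- As `A x` lies in the span of `μ` and `e`, `z - x` is `A`-orthogonal to `x`.
lemma PosDef.dotProduct_mulVec_add_sq_div_le (hA : A.PosDef) {μ e x z : n → ℝ} {l g : ℝ}
    (hx : A *ᵥ x = l • μ + g • e) (hμ : μ ⬝ᵥ z = μ ⬝ᵥ x) (he : e ⬝ᵥ z = e ⬝ᵥ x) (i : n) :
    x ⬝ᵥ (A *ᵥ x) + (z i - x i) ^ 2 / A⁻¹ i i ≤ z ⬝ᵥ (A *ᵥ z) := by
  have horth : (z - x) ⬝ᵥ (A *ᵥ x) = 0 := by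
    rw [hx, dotProduct_add, dotProduct_smul, dotProduct_smul, dotProduct_comm _ μ,
      dotProduct_comm _ e, dotProduct_sub, dotProduct_sub, hμ, he]
    simp
  have hgap := hA.sq_apply_le_inv_apply_mul (z - x) i
  have hz := hA.isSymm.add_dotProduct_mulVec_add x (z - x)
  rw [add_sub_cancel, horth, mul_zero, add_zero] at hz
  rw [hz]
  gcongr
  exact div_le_of_le_mul₀ hA.inv.diag_pos.le (hA.posSemidef.dotProduct_mulVec_nonneg _)
    (by rwa [mul_comm] at hgap)

lemma PosDef.exists_mulVec_eq_smul_add_smul (hA : A.PosDef) (μ : n → ℝ) {e : n → ℝ}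
    (he : e ≠ 0) {i : n} (hi : (A⁻¹ *ᵥ μ) i ≠ 0 ∨ (A⁻¹ *ᵥ e) i ≠ 0) :
    ∃ (x : n → ℝ) (l g : ℝ), e ⬝ᵥ x = 1 ∧ A *ᵥ x = l • μ + g • e ∧ x i ≠ 0 := by
  have hC : e ⬝ᵥ (A⁻¹ *ᵥ e) ≠ 0 := (hA.inv.dotProduct_mulVec_pos he).ne'
  obtain ⟨l, g, hbudget, hxi⟩ := exists_mul_add_mul_eq_one_and_ne_zero
    (B := e ⬝ᵥ (A⁻¹ *ᵥ μ)) hC hi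
  refine ⟨l • (A⁻¹ *ᵥ μ) + g • (A⁻¹ *ᵥ e), l, g, ?_, ?_, ?_⟩
  · simpa [dotProduct_add, dotProduct_smul] using hbudget
  · simp only [mulVec_add, mulVec_smul, hA.mulVec_inv_mulVec]
  · simpa using hxi

end Matrix

theorem spanning_set_contains_Sstar_general
    {d : ℕ} (A : Matrix (Fin d) (Fin d) ℝ) (hA : A.PosDef)
    (μ : Fin d → ℝ)
    (S : Set (Fin d)) (hS : SpansFrontier A μ S) :
    {i : Fin d | (A⁻¹ *ᵥ μ) i ≠ 0 ∨ (A⁻¹ *ᵥ fun _ => (1 : ℝ)) i ≠ 0} ⊆ S := by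
  intro i hi
  by_contra hiS
  have hone : (fun _ => (1 : ℝ)) ≠ 0 := fun h => one_ne_zero (congrFun h i)
  obtain ⟨x, l, g, hbudget, hAx, hxi⟩ := hA.exists_mulVec_eq_smul_add_smul μ hone hi
  have hgap : ((x ⬝ᵥ (A *ᵥ x) + x i ^ 2 / A⁻¹ i i : ℝ) : EReal) ≤ vS A μ S (μ ⬝ᵥ x) := by
    refine le_sInf ?_
    rintro _ ⟨z, hz1, hzμ, hzS, rfl⟩
    have hz := hA.dotProduct_mulVec_add_sq_div_le hAx hzμ (hz1.trans hbudget.symm) i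
    rw [hzS i hiS, zero_sub, neg_sq] at hz
    exact EReal.coe_le_coe_iff.mpr hz
  have hmin : vS A μ Set.univ (μ ⬝ᵥ x) ≤ (x ⬝ᵥ (A *ᵥ x) : ℝ) :=
    sInf_le ⟨x, hbudget, rfl, by simp, rfl⟩
  have hle := EReal.coe_le_coe_iff.mp (hgap.trans ((hS _).trans_le hmin))
  have hpos : 0 < x i ^ 2 / A⁻¹ i i := div_pos (by positivity) hA.inv.diag_pos
  linarith

/-- necessity: if `μ` is not a scalar multiple of `1` and `S` spans
the mean-variance frontier, then `S ⊇ S*`. -/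
theorem spanning_set_contains_Sstar
    {d : ℕ} (hd : 2 ≤ d) (A : Matrix (Fin d) (Fin d) ℝ) (hA : A.PosDef)
    (μ : Fin d → ℝ) (hμ : ∀ t : ℝ, μ ≠ t • (fun _ => (1 : ℝ)))
    (S : Set (Fin d)) (hS : SpansFrontier A μ S) :
    {i : Fin d | (A⁻¹ *ᵥ μ) i ≠ 0 ∨ (A⁻¹ *ᵥ fun _ => (1 : ℝ)) i ≠ 0} ⊆ S :=
  spanning_set_contains_Sstar_general A hA μ S hS
end
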